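/- arXiv:2405.03411 — 3 statements merged into one kernel-verified Lean document; each statement's English description precedes it below -/
import Mathlib

section
/- Let X_free ⊆ ℝⁿ, let x_I, x_G ∈ X_free, and let π : [0,1] → ℝⁿ be a continuous path from x_I to x_G with range contained in X_free. Then the L² greedy informed set determined by π is contained in the L² informed set determined by the cost of π; that is, {x ∈ X_free : f̂(x) ≤ sup_{t ∈ [0,1]} f̂(π(t))} ⊆ {x ∈ X_free : f̂(x) ≤ c(π)}. -/
/-- The L² informed heuristic for initial state `xI` and goal state `xG`. -/
noncomputable def fhat {n : ℕ} (xI xG x : EuclideanSpace ℝ (Fin n)) : ℝ :=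
  ‖x - xI‖ + ‖x - xG‖

theorem fhat_pi_le_eVar {n : ℕ} (xI xG : EuclideanSpace ℝ (Fin n))
    (π : ℝ → EuclideanSpace ℝ (Fin n)) (hπ0 : π 0 = xI) (hπ1 : π 1 = xG)
    (t : ℝ) (ht : t ∈ Set.Icc (0:ℝ) 1) :
    ENNReal.ofReal (fhat xI xG (π t)) ≤ eVariationOn π (Set.Icc 0 1) := by
  have h1 : ENNReal.ofReal ‖π t - xI‖ ≤ eVariationOn π (Set.Icc 0 t) := by
    rw [← hπ0]
    have := eVariationOn.edist_le π (Set.mem_Icc.2 ⟨le_refl 0, ht.1⟩)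
      (Set.mem_Icc.2 ⟨ht.1, le_refl t⟩)
    simpa [edist_dist, dist_eq_norm, norm_sub_rev (π 0), ENNReal.ofReal] using this
  have h2 : ENNReal.ofReal ‖π t - xG‖ ≤ eVariationOn π (Set.Icc t 1) := by
    rw [← hπ1]
    have := eVariationOn.edist_le π (Set.mem_Icc.2 ⟨le_refl t, ht.2⟩)
      (Set.mem_Icc.2 ⟨ht.2, le_refl 1⟩)
    simpa [edist_dist, dist_eq_norm, norm_sub_rev (π 1), ENNReal.ofReal] using this
  have hsum' : eVariationOn π (Set.Icc 0 t) + eVariationOn π (Set.Icc t 1)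
      = eVariationOn π (Set.Icc 0 1) := by
    simpa [Set.univ_inter] using eVariationOn.Icc_add_Icc π ht.1 ht.2 (Set.mem_univ t)
  calc ENNReal.ofReal (fhat xI xG (π t))
      ≤ ENNReal.ofReal ‖π t - xI‖ + ENNReal.ofReal ‖π t - xG‖ :=
        ENNReal.ofReal_add_le
    _ ≤ eVariationOn π (Set.Icc 0 t) + eVariationOn π (Set.Icc t 1) := add_le_add h1 h2
    _ = eVariationOn π (Set.Icc 0 1) := hsum'

/-- **The greedy informed set is contained in the informed set.**
For a continuous path `π` from `xI` to `xG` with range in `Xfree`, the L² greedy informed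
set `{x ∈ Xfree | f̂ x ≤ sup_t f̂(π t)}` is contained in the L² informed set
`{x ∈ Xfree | f̂ x ≤ c(π)}`, where `c(π)` is the arclength (total variation) of `π`. -/
theorem greedy_informed_set_subset_informed_set
    {n : ℕ} (Xfree : Set (EuclideanSpace ℝ (Fin n)))
    (xI xG : EuclideanSpace ℝ (Fin n)) (hI : xI ∈ Xfree) (hG : xG ∈ Xfree)
    (π : ℝ → EuclideanSpace ℝ (Fin n))
    (hπcont : ContinuousOn π (Set.Icc 0 1))
    (hπ0 : π 0 = xI) (hπ1 : π 1 = xG)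
    (hπfree : ∀ t ∈ Set.Icc (0:ℝ) 1, π t ∈ Xfree) :
    {x ∈ Xfree | fhat xI xG x ≤ ⨆ t : Set.Icc (0:ℝ) 1, fhat xI xG (π t)} ⊆
      {x ∈ Xfree | ENNReal.ofReal (fhat xI xG x) ≤ eVariationOn π (Set.Icc 0 1)} := by
  intro x hx
  obtain ⟨hxF, hxle⟩ := hx
  refine ⟨hxF, ?_⟩
  set E := eVariationOn π (Set.Icc (0:ℝ) 1)
  by_cases hE : E = ⊤
  · simp [hE]
  · have hVle : ∀ t : Set.Icc (0:ℝ) 1, fhat xI xG (π t) ≤ E.toReal := by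
      intro t
      have h := fhat_pi_le_eVar xI xG π hπ0 hπ1 t t.2
      have hnn : 0 ≤ fhat xI xG (π t) := add_nonneg (norm_nonneg _) (norm_nonneg _)
      have := (ENNReal.ofReal_le_iff_le_toReal hE).1 h
      exact this
    have hsup : (⨆ t : Set.Icc (0:ℝ) 1, fhat xI xG (π t)) ≤ E.toReal := by
      haveI : Nonempty (Set.Icc (0:ℝ) 1) := ⟨⟨0, by norm_num⟩⟩
      exact ciSup_le hVle
    have : fhat xI xG x ≤ E.toReal := le_trans hxle hsup
    calc ENNReal.ofReal (fhat xI xG x) ≤ ENNReal.ofReal E.toReal :=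
          ENNReal.ofReal_le_ofReal this
      _ ≤ E := ENNReal.ofReal_toReal_le
end

section
/- Let n ≥ 1, let x_I, x_G ∈ ℝⁿ with c_min = ‖x_I − x_G‖, and let c ≥ c_min. Then the Lebesgue measure of the prolate hyperspheroid X_PHS = {x ∈ ℝⁿ : ‖x − x_I‖ + ‖x − x_G‖ ≤ c} equals (ζ_n / 2ⁿ) · c · (c² − c_min²)^((n−1)/2), where ζ_n is the Lebesgue measure of the closed unit ball in ℝⁿ. -/
open Finset MeasureTheory


lemma phs_key (a f S t : ℝ) (hf : 0 ≤ f) (hfa : f ≤ a) (hS : 0 ≤ S) :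
    Real.sqrt (S + (t+f)^2) + Real.sqrt (S + (t-f)^2) ≤ 2*a ↔
    (a^2*S + (a^2-f^2)*t^2 ≤ a^2*(a^2-f^2) ∧ S + t^2 + f^2 ≤ 2*a^2) := by
  have ha : 0 ≤ a := le_trans hf hfa
  set P := Real.sqrt (S + (t+f)^2) with hPdef
  set Q := Real.sqrt (S + (t-f)^2) with hQdef
  have hP0 : 0 ≤ P := Real.sqrt_nonneg _
  have hQ0 : 0 ≤ Q := Real.sqrt_nonneg _
  have hP2 : P^2 = S + (t+f)^2 := Real.sq_sqrt (by positivity)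
  have hQ2 : Q^2 = S + (t-f)^2 := Real.sq_sqrt (by positivity)
  constructor
  · intro h
    have h1 : (P+Q)*(P+Q) ≤ (2*a)*(2*a) :=
      mul_self_le_mul_self (add_nonneg hP0 hQ0) h
    have hR : P*Q ≤ 2*a^2 - (S + t^2 + f^2) := by nlinarith
    have hW : S + t^2 + f^2 ≤ 2*a^2 := by nlinarith [mul_nonneg hP0 hQ0]
    refine ⟨?_, hW⟩
    have h3 : (P*Q)^2 ≤ (2*a^2 - (S + t^2 + f^2))^2 :=
      pow_le_pow_left₀ (mul_nonneg hP0 hQ0) hR 2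
    nlinarith [h3, hP2, hQ2]
  · rintro ⟨h1, h2⟩
    have hR2 : 0 ≤ 2*a^2 - (S + t^2 + f^2) := by linarith
    have h3 : (P*Q)^2 ≤ (2*a^2 - (S + t^2 + f^2))^2 := by nlinarith
    have hPQ : P*Q ≤ 2*a^2 - (S + t^2 + f^2) := by
      nlinarith [mul_nonneg hP0 hQ0]
    have h4 : (P+Q)^2 ≤ (2*a)^2 := by nlinarith
    nlinarith [add_nonneg hP0 hQ0]

set_option maxHeartbeats 1000000 in
lemma phs_image {n : ℕ} [NeZero n] {a f : ℝ} (hf : 0 ≤ f) (hfa : f ≤ a) :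
    (Matrix.toEuclideanLin
        (Matrix.diagonal (fun i : Fin n => if i = 0 then a else Real.sqrt (a^2 - f^2)))) ''
      Metric.closedBall 0 1 =
    {y : EuclideanSpace ℝ (Fin n) |
      ‖y + f • EuclideanSpace.single (0 : Fin n) (1:ℝ)‖ +
        ‖y - f • EuclideanSpace.single (0 : Fin n) (1:ℝ)‖ ≤ 2*a} := by
  have ha : 0 ≤ a := le_trans hf hfa
  set bb := Real.sqrt (a^2 - f^2) with hbbdef
  have hbb0 : 0 ≤ bb := Real.sqrt_nonneg _
  have hbb2 : bb^2 = a^2 - f^2 := Real.sq_sqrt (by nlinarith)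
  set T := Matrix.toEuclideanLin
      (Matrix.diagonal (fun i : Fin n => if i = 0 then a else bb)) with hTdef
  have hT : ∀ (z : EuclideanSpace ℝ (Fin n)) (i : Fin n),
      T z i = (if i = 0 then a else bb) * z i := by
    intro z i
    simp [hTdef, Matrix.toEuclideanLin_apply, Matrix.mulVec_diagonal]
  have hsum : ∀ g : Fin n → ℝ, ∑ i, g i = (∑ i ∈ Finset.univ.erase 0, g i) + g 0 :=
    fun g => (Finset.sum_erase_add Finset.univ g (Finset.mem_univ (0 : Fin n))).symm
  ext y
  set t := y 0 with htdef
  set S := ∑ i ∈ Finset.univ.erase (0 : Fin n), (y i)^2 with hSdef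
  have hS : 0 ≤ S := Finset.sum_nonneg fun i _ => sq_nonneg _
  have hnorm : ∀ w : ℝ, ‖y + w • EuclideanSpace.single (0 : Fin n) (1:ℝ)‖
      = Real.sqrt (S + (t+w)^2) := by
    intro w
    rw [EuclideanSpace.norm_eq]
    congr 1
    rw [hsum]
    congr 1
    · refine Finset.sum_congr rfl fun i hi => ?_
      have h0 : i ≠ 0 := Finset.ne_of_mem_erase hi
      simp [EuclideanSpace.single_apply, h0, sq_abs]
    · simp [EuclideanSpace.single_apply, sq_abs]; rfl
  have hnormsub : ‖y - f • EuclideanSpace.single (0 : Fin n) (1:ℝ)‖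
      = Real.sqrt (S + (t-f)^2) := by
    rw [sub_eq_add_neg, ← neg_smul, hnorm (-f)]
    ring_nf
  have hrhs : (y ∈ {y : EuclideanSpace ℝ (Fin n) |
      ‖y + f • EuclideanSpace.single (0 : Fin n) (1:ℝ)‖ +
        ‖y - f • EuclideanSpace.single (0 : Fin n) (1:ℝ)‖ ≤ 2*a}) ↔
      (a^2*S + (a^2-f^2)*t^2 ≤ a^2*(a^2-f^2) ∧ S + t^2 + f^2 ≤ 2*a^2) := by
    rw [Set.mem_setOf_eq, hnorm f, hnormsub, phs_key a f S t hf hfa hS]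
  rw [hrhs]
  have hmem : ∀ z : EuclideanSpace ℝ (Fin n),
      z ∈ Metric.closedBall (0 : EuclideanSpace ℝ (Fin n)) 1 ↔ ∑ i, (z i)^2 ≤ 1 := by
    intro z
    rw [Metric.mem_closedBall, dist_zero_right, EuclideanSpace.norm_eq,
      show (1:ℝ) = Real.sqrt 1 by simp,
      Real.sqrt_le_sqrt_iff (by positivity)]
    simp [sq_abs]
  constructor
  · rintro ⟨z, hz, rfl⟩
    rw [hmem] at hz
    rw [hsum] at hz
    have hZ : 0 ≤ ∑ i ∈ Finset.univ.erase (0 : Fin n), (z i)^2 :=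
      Finset.sum_nonneg fun i _ => sq_nonneg _
    set Z := ∑ i ∈ Finset.univ.erase (0 : Fin n), (z i)^2 with hZdef
    have ht' : t = a * z 0 := by rw [htdef]; rw [hT]; simp
    have hS' : S = bb^2 * Z := by
      rw [hSdef, hZdef, Finset.mul_sum]
      refine Finset.sum_congr rfl fun i hi => ?_
      have h0 : i ≠ 0 := Finset.ne_of_mem_erase hi
      rw [hT]
      simp [h0]
      ring
    constructor
    · rw [ht', hS', ← hbb2]
      nlinarith [sq_nonneg a, sq_nonneg bb, sq_nonneg (z 0), mul_nonneg (sq_nonneg a) (sq_nonneg bb)]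
    · rw [ht', hS']
      nlinarith [sq_nonneg a, sq_nonneg bb, sq_nonneg (z 0), hbb2, sq_nonneg f]
  · rintro ⟨h1, h2⟩
    have hyS : S = 0 → ∀ i, i ≠ 0 → y i = 0 := by
      intro h0 i hi
      have := (Finset.sum_eq_zero_iff_of_nonneg
        (fun i _ => sq_nonneg (y i))).mp (hSdef ▸ h0) i (by simp [hi])
      exact pow_eq_zero_iff (by norm_num) |>.mp this
    rcases eq_or_lt_of_le ha with ha0 | hapos
    · -- a = 0
      have hf0 : f = 0 := le_antisymm (by linarith) hf
      have hS0 : S = 0 := by nlinarith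
      have ht0 : t = 0 := by nlinarith
      refine ⟨0, ?_, ?_⟩
      · rw [hmem]
        have h0 : ∀ i : Fin n, (0 : EuclideanSpace ℝ (Fin n)) i = 0 := fun _ => rfl
        simp [h0]
      · refine PiLp.ext fun i => ?_
        rw [hT]
        have h0 : (0 : EuclideanSpace ℝ (Fin n)) i = 0 := rfl
        rw [h0, mul_zero]
        rcases eq_or_ne i 0 with rfl | hi
        · exact ht0.symm
        · exact (hyS hS0 i hi).symm
    · rcases eq_or_lt_of_le hfa with hfa0 | hflt
      · -- f = a, bb = 0
        have hbbz : bb = 0 := by rw [hbbdef, hfa0]; simp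
        have h1' : a^2 * S ≤ 0 := by rw [hfa0] at h1; nlinarith [h1]
        have hS0 : S = 0 := le_antisymm (by nlinarith [mul_pos hapos hapos]) hS
        have ht2 : t^2 ≤ a^2 := by nlinarith
        set z : EuclideanSpace ℝ (Fin n) :=
          WithLp.toLp 2 (fun i => if i = 0 then t/a else 0 : Fin n → ℝ) with hzdef
        have hzap : ∀ i, z i = if i = 0 then t/a else 0 := fun _ => rfl
        refine ⟨z, ?_, ?_⟩
        · rw [hmem, hsum]
          have hzer : ∀ i ∈ Finset.univ.erase (0 : Fin n), (z i)^2 = 0 := by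
            intro i hi
            have h0 : i ≠ 0 := Finset.ne_of_mem_erase hi
            rw [hzap]
            simp [h0]
          rw [Finset.sum_eq_zero hzer, hzap, if_pos rfl, zero_add, div_pow,
            div_le_one (by positivity)]
          exact ht2
        · refine PiLp.ext fun i => ?_
          rw [hT, hzap]
          rcases eq_or_ne i 0 with rfl | hi
          · rw [if_pos rfl, if_pos rfl]
            field_simp
            exact htdef
          · rw [if_neg hi, if_neg hi, mul_zero]
            exact (hyS hS0 i hi).symm
      · -- f < a, bb > 0
        have hbbpos : 0 < bb := Real.sqrt_pos.mpr (by nlinarith)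
        set z : EuclideanSpace ℝ (Fin n) :=
          WithLp.toLp 2 (fun i => if i = 0 then t/a else y i / bb : Fin n → ℝ) with hzdef
        have hzap : ∀ i, z i = if i = 0 then t/a else y i / bb := fun _ => rfl
        refine ⟨z, ?_, ?_⟩
        · rw [hmem, hsum]
          have hrw : ∑ i ∈ Finset.univ.erase (0 : Fin n), (z i)^2 = S / bb^2 := by
            rw [hSdef, Finset.sum_div]
            refine Finset.sum_congr rfl fun i hi => ?_
            have h0 : i ≠ 0 := Finset.ne_of_mem_erase hi
            rw [hzap, if_neg h0, div_pow]
          rw [hrw, hzap, if_pos rfl, div_pow,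
            div_add_div _ _ (by positivity) (by positivity),
            div_le_one (by positivity)]
          nlinarith [hbb2]
        · refine PiLp.ext fun i => ?_
          rw [hT, hzap]
          rcases eq_or_ne i 0 with rfl | hi
          · rw [if_pos rfl, if_pos rfl]
            field_simp
            exact htdef
          · rw [if_neg hi, if_neg hi]
            field_simp

set_option maxHeartbeats 1000000 in
/-- **Lebesgue measure of a prolate hyperspheroid.**
For `n ≥ 1`, foci `xI, xG ∈ ℝⁿ` with `c_min = ‖xI − xG‖` and transverse diameter
`c ≥ c_min`, the Lebesgue measure of
`X_PHS = {x | ‖x − xI‖ + ‖x − xG‖ ≤ c}` equals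
`(ζₙ / 2ⁿ) · c · (c² − c_min²)^((n−1)/2)`, where `ζₙ` is the Lebesgue measure of the
closed unit ball in ℝⁿ. -/
theorem volume_prolate_hyperspheroid
    {n : ℕ} (hn : 1 ≤ n) (xI xG : EuclideanSpace ℝ (Fin n)) (c : ℝ)
    (hc : ‖xI - xG‖ ≤ c) :
    volume {x : EuclideanSpace ℝ (Fin n) | ‖x - xI‖ + ‖x - xG‖ ≤ c} =
      ENNReal.ofReal
        ((volume (Metric.closedBall (0 : EuclideanSpace ℝ (Fin n)) 1)).toReal / 2 ^ n *
          c * (c ^ 2 - ‖xI - xG‖ ^ 2) ^ (((n : ℝ) - 1) / 2)) := by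
  haveI : NeZero n := ⟨by omega⟩
  set cm := ‖xI - xG‖ with hcmdef
  have hcm0 : 0 ≤ cm := norm_nonneg _
  have hc0 : 0 ≤ c := le_trans hcm0 hc
  set f := cm / 2 with hfdef
  set a := c / 2 with hadef
  have hf : 0 ≤ f := by positivity
  have hfa : f ≤ a := by rw [hfdef, hadef]; linarith
  have ha : 0 ≤ a := le_trans hf hfa
  -- unit vector in the direction of xG - xI
  obtain ⟨u, hu1, hum⟩ : ∃ u : EuclideanSpace ℝ (Fin n), ‖u‖ = 1 ∧ (2:ℝ)⁻¹ • (xG - xI) = f • u := by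
    rcases eq_or_ne xI xG with h | h
    · refine ⟨EuclideanSpace.single (0 : Fin n) (1:ℝ), by simp, ?_⟩
      have hf0 : f = 0 := by rw [hfdef, hcmdef, h]; simp
      rw [h, hf0]; simp
    · have hne : xG - xI ≠ 0 := sub_ne_zero.mpr (Ne.symm h)
      have hnorm_ne : ‖xG - xI‖ ≠ 0 := norm_ne_zero_iff.mpr hne
      refine ⟨‖xG - xI‖⁻¹ • (xG - xI), ?_, ?_⟩
      · rw [norm_smul, norm_inv, norm_norm, inv_mul_cancel₀ hnorm_ne]
      · rw [smul_smul]
        congr 1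
        rw [hfdef, hcmdef, norm_sub_rev xI xG]
        field_simp
  -- orthonormal basis with b 0 = u
  have horth : Orthonormal ℝ (Set.restrict ({0} : Set (Fin n)) (fun _ => u)) := by
    constructor
    · intro i; exact hu1
    · intro i j hij
      exfalso
      refine hij (Subtype.ext ?_)
      have hi := i.2
      have hj := j.2
      simp only [Set.mem_singleton_iff] at hi hj
      rw [hi, hj]
  obtain ⟨b, hb⟩ := horth.exists_orthonormalBasis_extension_of_card_eq
    (by simp [finrank_euclideanSpace])
  have hb0 : b 0 = u := hb 0 rfl
  have e0def : b.repr u = EuclideanSpace.single (0 : Fin n) (1:ℝ) := by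
    rw [← hb0]; exact b.repr_self 0
  set m : EuclideanSpace ℝ (Fin n) := (2:ℝ)⁻¹ • (xI + xG) with hmdef
  have hmI : m - xI = f • u := by
    rw [← hum, hmdef]
    module
  have hmG : m - xG = -(f • u) := by
    rw [← hum, hmdef]
    module
  -- Step 1: translation
  have step1 : volume {x : EuclideanSpace ℝ (Fin n) | ‖x - xI‖ + ‖x - xG‖ ≤ c} =
      volume {y : EuclideanSpace ℝ (Fin n) | ‖y + f • u‖ + ‖y - f • u‖ ≤ c} := by
    rw [← measure_preimage_add_right volume m {x : EuclideanSpace ℝ (Fin n) | ‖x - xI‖ + ‖x - xG‖ ≤ c}]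
    congr 1
    ext y
    simp only [Set.mem_preimage, Set.mem_setOf_eq]
    rw [show y + m - xI = y + f • u by rw [← hmI]; abel,
      show y + m - xG = y - f • u by rw [show y - f • u = y + -(f • u) by abel, ← hmG]; abel]
  -- Step 2: rotation
  set e0 : EuclideanSpace ℝ (Fin n) := EuclideanSpace.single (0 : Fin n) (1:ℝ) with he0def
  have step2 : volume {y : EuclideanSpace ℝ (Fin n) | ‖y + f • u‖ + ‖y - f • u‖ ≤ c} =
      volume {w : EuclideanSpace ℝ (Fin n) | ‖w + f • e0‖ + ‖w - f • e0‖ ≤ c} := by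
    have hpre : {y : EuclideanSpace ℝ (Fin n) | ‖y + f • u‖ + ‖y - f • u‖ ≤ c} =
        b.repr ⁻¹' {w : EuclideanSpace ℝ (Fin n) | ‖w + f • e0‖ + ‖w - f • e0‖ ≤ c} := by
      ext y
      simp only [Set.mem_preimage, Set.mem_setOf_eq]
      rw [← b.repr.norm_map (y + f • u), ← b.repr.norm_map (y - f • u),
        map_add, map_sub, LinearIsometryEquiv.map_smul, e0def]
    rw [hpre]
    refine b.measurePreserving_repr.measure_preimage ?_
    have hclosed : IsClosed {w : EuclideanSpace ℝ (Fin n) | ‖w + f • e0‖ + ‖w - f • e0‖ ≤ c} :=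
      isClosed_le (((continuous_id.add continuous_const).norm).add
        ((continuous_id.sub continuous_const).norm)) continuous_const
    exact hclosed.measurableSet.nullMeasurableSet
  -- Step 3: ellipsoid as image of ball
  set bb := Real.sqrt (a^2 - f^2) with hbbdef
  have hbb0 : 0 ≤ bb := Real.sqrt_nonneg _
  set T := Matrix.toEuclideanLin
      (Matrix.diagonal (fun i : Fin n => if i = 0 then a else bb)) with hTdef
  have step3 : {w : EuclideanSpace ℝ (Fin n) | ‖w + f • e0‖ + ‖w - f • e0‖ ≤ c} =
      T '' Metric.closedBall 0 1 := by
    rw [hTdef, he0def, phs_image hf hfa]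
    have h2a : c = 2 * a := by rw [hadef]; ring
    rw [← h2a]
  -- Step 4: determinant
  have hdet : LinearMap.det T = a * bb ^ (n - 1) := by
    rw [hTdef, Matrix.toEuclideanLin_eq_toLin, LinearMap.det_toLin, Matrix.det_diagonal,
      ← Finset.prod_erase_mul Finset.univ _ (Finset.mem_univ (0 : Fin n)), if_pos rfl]
    rw [Finset.prod_congr rfl (fun i hi => if_neg (Finset.ne_of_mem_erase hi)),
      Finset.prod_const, mul_comm]
    congr 2
    rw [Finset.card_erase_of_mem (Finset.mem_univ _), Finset.card_univ, Fintype.card_fin]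
  rw [step1, step2, step3, Measure.addHaar_image_linearMap, hdet]
  -- Step 5: arithmetic
  set ζ := (volume (Metric.closedBall (0 : EuclideanSpace ℝ (Fin n)) 1)).toReal with hζdef
  have hζ0 : 0 ≤ ζ := ENNReal.toReal_nonneg
  have hvol : volume (Metric.closedBall (0 : EuclideanSpace ℝ (Fin n)) 1) = ENNReal.ofReal ζ :=
    (ENNReal.ofReal_toReal measure_closedBall_lt_top.ne).symm
  rw [hvol, abs_of_nonneg (by positivity), ← ENNReal.ofReal_mul (by positivity)]
  congr 1
  -- real computation
  have hX : (0:ℝ) ≤ c^2 - cm^2 := by nlinarith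
  have hbbval : bb = Real.sqrt (c^2 - cm^2) / 2 := by
    rw [hbbdef, hadef, hfdef, show (c/2)^2 - (cm/2)^2 = (c^2 - cm^2) * (1/2)^2 by ring,
      Real.sqrt_mul hX, Real.sqrt_sq (by norm_num)]
    ring
  have hpow : (Real.sqrt (c^2 - cm^2)) ^ (n - 1) = (c^2 - cm^2) ^ (((n:ℝ) - 1)/2) := by
    rw [Real.sqrt_eq_rpow, ← Real.rpow_natCast ((c^2 - cm^2) ^ ((1:ℝ)/2)) (n-1),
      ← Real.rpow_mul hX]
    congr 1
    rw [Nat.cast_sub hn]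
    push_cast
    ring
  rw [hbbval, div_pow, hpow, hadef]
  rw [show (2:ℝ)^n = 2 * 2^(n-1) by rw [← pow_succ']; congr 1; omega]
  have h2 : (0:ℝ) < 2^(n-1) := by positivity
  field_simp
end

section
/- Let n ≥ 1, let x_I, x_G ∈ ℝⁿ with c_min = ‖x_I − x_G‖ > 0, and let c_min ≤ f̂_max ≤ c_i with c_min < c_i. Then the ratio of the Lebesgue measures of the two confocal prolate hyperspheroids with foci x_I, x_G and transverse diameters f̂_max and c_i respectively equals (f̂_max / c_i) · ((f̂_max² − c_min²)/(c_i² − c_min²))^((n−1)/2). In particular, the ratio ρ of the measure of the greedy informed hyperspheroid (transverse diameter f̂_max) to the measure of the informed hyperspheroid (transverse diameter c_i) admits this closed form and satisfies ρ ≤ 1. -/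
set_option maxHeartbeats 1000000


open MeasureTheory RealInnerProductSpace Pointwise

lemma ellipse_key {a f b t w : ℝ} (hf : 0 ≤ f) (hfa : f ≤ a)
    (ha : 0 < a) (hb2 : b^2 = a^2 - f^2) (hw : 0 ≤ w) (hside : 0 < b ∨ w = 0) :
    Real.sqrt ((a*t+f)^2 + b^2*w^2) + Real.sqrt ((a*t-f)^2 + b^2*w^2) ≤ 2*a ↔ t^2 + w^2 ≤ 1 := by
  constructor
  · intro h
    by_contra hgt
    push_neg at hgt
    rcases hside with hb | hw0
    · have key : 0 < b^2*(t^2+w^2-1) := mul_pos (pow_pos hb 2) (by linarith)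
      have h1 : (a+f*t)^2 < (a*t+f)^2 + b^2*w^2 := by nlinarith [key]
      have h2 : (a-f*t)^2 < (a*t-f)^2 + b^2*w^2 := by nlinarith [key]
      have p1 : a+f*t < Real.sqrt ((a*t+f)^2 + b^2*w^2) := by
        rcases le_or_gt 0 (a+f*t) with h0 | h0
        · exact (Real.lt_sqrt h0).2 h1
        · exact h0.trans_le (Real.sqrt_nonneg _)
      have p2 : a-f*t < Real.sqrt ((a*t-f)^2 + b^2*w^2) := by
        rcases le_or_gt 0 (a-f*t) with h0 | h0
        · exact (Real.lt_sqrt h0).2 h2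
        · exact h0.trans_le (Real.sqrt_nonneg _)
      linarith
    · subst hw0
      have hs : ∀ y : ℝ, Real.sqrt (y^2 + b^2*0^2) = |y| := by
        intro y; rw [show y^2 + b^2*0^2 = y^2 by ring, Real.sqrt_sq_eq_abs]
      rw [hs, hs] at h
      have ht : 1 < |t| := by nlinarith [abs_nonneg t, sq_abs t]
      have habs : |2*(a*t)| ≤ |a*t+f| + |a*t-f| := by
        calc |2*(a*t)| = |(a*t+f) + (a*t-f)| := by ring_nf
          _ ≤ |a*t+f| + |a*t-f| := abs_add_le _ _
      rw [abs_mul, abs_mul, abs_of_nonneg (by norm_num : (0:ℝ) ≤ 2), abs_of_nonneg ha.le] at habs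
      nlinarith [mul_pos ha (sub_pos.mpr ht)]
  · intro h
    have ht : -1 ≤ t := by nlinarith [sq_nonneg (t+1)]
    have ht' : t ≤ 1 := by nlinarith [sq_nonneg (t-1)]
    have h01 : 0 ≤ a + f*t := by nlinarith
    have h02 : 0 ≤ a - f*t := by nlinarith
    have k1 : Real.sqrt ((a*t+f)^2 + b^2*w^2) ≤ a + f*t := by
      rw [show a+f*t = Real.sqrt ((a+f*t)^2) from (Real.sqrt_sq h01).symm]
      exact Real.sqrt_le_sqrt (by nlinarith)
    have k2 : Real.sqrt ((a*t-f)^2 + b^2*w^2) ≤ a - f*t := by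
      rw [show a-f*t = Real.sqrt ((a-f*t)^2) from (Real.sqrt_sq h02).symm]
      exact Real.sqrt_le_sqrt (by nlinarith)
    linarith

lemma vol_spheroid {n : ℕ} (hn : 1 ≤ n) (xI xG : EuclideanSpace ℝ (Fin n)) (c : ℝ)
    (hmin : 0 < ‖xI - xG‖) (hc : ‖xI - xG‖ ≤ c) (hside : ‖xI - xG‖ < c ∨ n = 1) :
    volume {x : EuclideanSpace ℝ (Fin n) | ‖x - xI‖ + ‖x - xG‖ ≤ c} =
      ENNReal.ofReal ((c / 2) * (Real.sqrt (c ^ 2 - ‖xI - xG‖ ^ 2) / 2) ^ (n - 1)) *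
        volume (Metric.closedBall (0 : EuclideanSpace ℝ (Fin n)) 1) := by
  set cm : ℝ := ‖xI - xG‖ with hcm
  set a : ℝ := c / 2 with haa
  set f : ℝ := cm / 2 with hff
  set b : ℝ := Real.sqrt (c ^ 2 - cm ^ 2) / 2 with hbb
  have hcpos : 0 < c := lt_of_lt_of_le hmin hc
  have ha : 0 < a := by rw [haa]; positivity
  have hf : 0 ≤ f := by rw [hff, hcm]; positivity
  have hfa : f ≤ a := by rw [haa, hff]; linarith
  have hΔ : 0 ≤ c ^ 2 - cm ^ 2 := by nlinarith
  have hb0 : 0 ≤ b := by rw [hbb]; positivity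
  have hb2 : b ^ 2 = a ^ 2 - f ^ 2 := by
    rw [hbb, haa, hff, div_pow, div_pow, div_pow, Real.sq_sqrt hΔ]; ring
  set u := cm⁻¹ • (xG - xI) with huu'
  have hcm0 : cm ≠ 0 := ne_of_gt hmin
  have hu : ‖u‖ = 1 := by
    rw [huu', norm_smul, norm_sub_rev, Real.norm_eq_abs, abs_inv, abs_of_pos hmin, ← hcm,
      inv_mul_cancel₀ hcm0]
  have huu : ⟪u, u⟫ = 1 := by rw [real_inner_self_eq_norm_sq, hu]; norm_num
  set m := (2:ℝ)⁻¹ • (xI + xG) with hmm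
  have hfcm : f * cm⁻¹ = 2⁻¹ := by rw [hff]; field_simp
  have hxI : xI = m - f • u := by rw [hmm, huu', smul_smul, hfcm]; module
  have hxG : xG = m + f • u := by rw [hmm, huu', smul_smul, hfcm]; module
  clear_value cm a f b u m
  set L : EuclideanSpace ℝ (Fin n) →ₗ[ℝ] EuclideanSpace ℝ (Fin n) :=
    { toFun := fun x => a • ((⟪u, x⟫) • u) + b • (x - (⟪u, x⟫) • u)
      map_add' := by intro x y; simp only [inner_add_right, add_smul]; module
      map_smul' := by intro r x; simp only [real_inner_smul_right, RingHom.id_apply, mul_smul]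
                      module } with hL
  have hLapp : ∀ x : EuclideanSpace ℝ (Fin n),
      L x = a • ((⟪u, x⟫) • u) + b • (x - (⟪u, x⟫) • u) := fun x => rfl
  clear_value L
  have hnorm2 : ∀ (α β : ℝ) (v : EuclideanSpace ℝ (Fin n)), ⟪u, v⟫ = 0 →
      ‖α • u + β • v‖ = Real.sqrt (α ^ 2 + β ^ 2 * ‖v‖ ^ 2) := by
    intro α β v hv
    rw [← Real.sqrt_sq (norm_nonneg (α • u + β • v))]
    congr 1
    rw [norm_add_sq_real, real_inner_smul_left, real_inner_smul_right, hv, norm_smul, norm_smul,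
      hu, Real.norm_eq_abs, Real.norm_eq_abs, mul_pow, mul_pow, sq_abs, sq_abs]
    ring
  have hw1 : n = 1 → ∀ v : EuclideanSpace ℝ (Fin n), ⟪u, v⟫ = 0 → v = 0 := by
    intro h1 v hv
    have hu0 : u ≠ 0 := by intro h; rw [h, norm_zero] at hu; norm_num at hu
    have hsp : Submodule.span ℝ ({u} : Set (EuclideanSpace ℝ (Fin n))) = ⊤ := by
      apply Submodule.eq_top_of_finrank_eq
      rw [finrank_span_singleton hu0, finrank_euclideanSpace, Fintype.card_fin, h1]
    have hv' : v ∈ Submodule.span ℝ ({u} : Set (EuclideanSpace ℝ (Fin n))) := by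
      rw [hsp]; exact Submodule.mem_top
    obtain ⟨s, rfl⟩ := Submodule.mem_span_singleton.mp hv'
    rw [real_inner_smul_right, huu, mul_one] at hv
    rw [hv, zero_smul]
  have hmem : ∀ x : EuclideanSpace ℝ (Fin n),
      (‖m + L x - xI‖ + ‖m + L x - xG‖ ≤ c) ↔ ‖x‖ ≤ 1 := by
    intro x
    set t : ℝ := ⟪u, x⟫ with ht
    set w := x - t • u with hww
    have hw : ⟪u, w⟫ = 0 := by
      rw [hww, inner_sub_right, real_inner_smul_right, huu, mul_one, ht, sub_self]
    have e1 : m + L x - xI = (a * t + f) • u + b • w := by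
      rw [hxI, hLapp, ← hww, ← ht]; module
    have e2 : m + L x - xG = (a * t - f) • u + b • w := by
      rw [hxG, hLapp, ← hww, ← ht]; module
    have n1 : ‖m + L x - xI‖ = Real.sqrt ((a * t + f) ^ 2 + b ^ 2 * ‖w‖ ^ 2) := by
      rw [e1, hnorm2 _ _ _ hw]
    have n2 : ‖m + L x - xG‖ = Real.sqrt ((a * t - f) ^ 2 + b ^ 2 * ‖w‖ ^ 2) := by
      rw [e2, hnorm2 _ _ _ hw]
    have hside' : 0 < b ∨ ‖w‖ = 0 := by
      rcases hside with h | h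
      · left; rw [hbb]
        have h2 : 0 < c ^ 2 - cm ^ 2 := by nlinarith
        positivity
      · right; rw [hw1 h w hw, norm_zero]
    have nx : ‖x‖ ^ 2 = t ^ 2 + ‖w‖ ^ 2 := by
      have hx : x = t • u + (1:ℝ) • w := by rw [hww]; module
      rw [hx, hnorm2 _ _ _ hw, Real.sq_sqrt (by positivity), one_pow, one_mul]
    rw [n1, n2, show c = 2 * a by rw [haa]; ring,
      ellipse_key hf hfa ha hb2 (norm_nonneg w) hside', ← nx,
      sq_le_one_iff₀ (norm_nonneg x)]
  have hset : {x : EuclideanSpace ℝ (Fin n) | ‖x - xI‖ + ‖x - xG‖ ≤ c} =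
      m +ᵥ (L '' Metric.closedBall 0 1) := by
    ext y
    simp only [Set.mem_setOf_eq, Set.mem_vadd_set, Set.mem_image, Metric.mem_closedBall,
      dist_zero_right]
    constructor
    · intro hy
      set z := y - m with hzz
      set tz : ℝ := ⟪u, z⟫ with htz
      set wz := z - tz • u with hwz'
      have hwz : ⟪u, wz⟫ = 0 := by
        rw [hwz', inner_sub_right, real_inner_smul_right, huu, mul_one, htz, sub_self]
      set x := (a⁻¹ * tz) • u + b⁻¹ • wz with hxx
      have hbw : b • (b⁻¹ • wz) = wz := by
        rcases hside with h | h
        · have hb : b ≠ 0 := by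
            rw [hbb]
            have h2 : 0 < c ^ 2 - cm ^ 2 := by nlinarith
            positivity
          rw [smul_smul, mul_inv_cancel₀ hb, one_smul]
        · rw [hw1 h wz hwz]; simp
      have htx : ⟪u, x⟫ = a⁻¹ * tz := by
        rw [hxx, inner_add_right, real_inner_smul_right, real_inner_smul_right, huu, hwz]
        ring
      have hLx : L x = z := by
        rw [hLapp, htx]
        have hh : x - (a⁻¹ * tz) • u = b⁻¹ • wz := by rw [hxx]; module
        rw [hh, hbw, smul_smul, show a * (a⁻¹ * tz) = tz by field_simp, hwz']
        module
      have hy' : y = m + L x := by rw [hLx, hzz]; module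
      refine ⟨L x, ⟨x, ?_, rfl⟩, ?_⟩
      · rw [← hmem x, ← hy']; exact hy
      · exact hy'.symm
    · rintro ⟨v, ⟨x, hx, rfl⟩, rfl⟩
      have hv : m +ᵥ L x = m + L x := rfl
      rw [hv, hmem x]
      exact hx
  rw [hset, measure_vadd, Measure.addHaar_image_linearMap]
  congr 1
  have hdet : LinearMap.det L = a * b ^ (n - 1) := by
    obtain ⟨n', rfl⟩ : ∃ n', n = n' + 1 := ⟨n - 1, by omega⟩
    have hcard : Module.finrank ℝ (EuclideanSpace ℝ (Fin (n' + 1))) = Fintype.card (Fin (n' + 1)) := by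
      rw [finrank_euclideanSpace, Fintype.card_fin]
    have horth : Orthonormal ℝ (Set.restrict {0} (fun _ : Fin (n' + 1) => u)) := by
      constructor
      · intro i; exact hu
      · intro i j hij
        exact absurd (Subtype.ext ((i.2 : i.1 ∈ ({0} : Set (Fin (n' + 1)))).trans
          (j.2 : j.1 ∈ ({0} : Set (Fin (n' + 1)))).symm)) hij
    obtain ⟨B, hB⟩ := horth.exists_orthonormalBasis_extension_of_card_eq hcard
    have hB0 : B 0 = u := hB 0 rfl
    have hBij : ∀ i j, ⟪B i, B j⟫ = if i = j then (1:ℝ) else 0 :=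
      orthonormal_iff_ite.mp B.orthonormal
    have hLB : ∀ j, L (B j) = if j = 0 then a • B 0 else b • B j := by
      intro j
      rw [hLapp]
      by_cases hj : j = 0
      · subst hj
        rw [hB0, huu, if_pos rfl, one_smul, sub_self, smul_zero, add_zero]
      · have h0 : ⟪u, B j⟫ = 0 := by
          rw [← hB0, hBij]
          simp [Ne.symm hj]
        rw [h0, if_neg hj, zero_smul, smul_zero, zero_add, sub_zero]
    rw [← LinearMap.det_toMatrix B.toBasis]
    have hM : LinearMap.toMatrix B.toBasis B.toBasis L =
        Matrix.diagonal (fun i => if i = 0 then a else b) := by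
      ext i j
      rw [LinearMap.toMatrix_apply, B.coe_toBasis, hLB j]
      by_cases hj : j = 0
      · subst hj
        rw [if_pos rfl, _root_.map_smul, ← B.coe_toBasis, B.toBasis.repr_self]
        simp only [Matrix.diagonal_apply, Finsupp.single_apply]
        by_cases hi : i = 0 <;> simp [Finsupp.single_apply, hi, eq_comm]
      · rw [if_neg hj, _root_.map_smul, ← B.coe_toBasis, B.toBasis.repr_self]
        by_cases hij : i = j
        · subst hij
          simp [Matrix.diagonal_apply, Finsupp.single_apply, hj]
        · simp [Matrix.diagonal_apply, Finsupp.single_apply, hij, Ne.symm hij]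
    rw [hM, Matrix.det_diagonal, Fin.prod_univ_succ]
    simp [Fin.succ_ne_zero]
  rw [hdet, abs_of_nonneg (by positivity), haa]

lemma vol_degenerate {n : ℕ} (hn2 : 2 ≤ n) (xI xG : EuclideanSpace ℝ (Fin n))
    (hmin : 0 < ‖xI - xG‖) :
    volume {x : EuclideanSpace ℝ (Fin n) | ‖x - xI‖ + ‖x - xG‖ ≤ ‖xI - xG‖} = 0 := by
  have hne : xG - xI ≠ 0 := by
    intro h
    rw [show xI - xG = -(xG - xI) by abel, h, neg_zero, norm_zero] at hmin
    exact lt_irrefl _ hmin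
  apply measure_mono_null
    (t := xI +ᵥ ((Submodule.span ℝ ({xG - xI} : Set (EuclideanSpace ℝ (Fin n)))) :
      Set (EuclideanSpace ℝ (Fin n))))
  · intro y hy
    have h1 : dist xI y + dist y xG = dist xI xG := by
      refine le_antisymm ?_ (dist_triangle _ _ _)
      rw [dist_eq_norm, dist_eq_norm, dist_eq_norm, norm_sub_rev xI y]
      exact hy
    have h2 : y ∈ segment ℝ xI xG := mem_segment_iff_wbtw.mpr (dist_add_dist_eq_iff.mp h1)
    obtain ⟨p, q, hp, hq, hpq, rfl⟩ := h2
    refine Set.mem_vadd_set.mpr ⟨q • (xG - xI),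
      Submodule.smul_mem _ _ (Submodule.mem_span_singleton_self _), ?_⟩
    show xI + q • (xG - xI) = p • xI + q • xG
    rw [show p = 1 - q by linarith]
    module
  · rw [measure_vadd]
    apply Measure.addHaar_submodule
    intro hS
    have h1 := finrank_span_singleton (K := ℝ) hne
    rw [hS, finrank_top, finrank_euclideanSpace, Fintype.card_fin] at h1
    omega

lemma ratio_alg {n : ℕ} (hn : 1 ≤ n) {c0 fm c : ℝ} (hc : c ≠ 0)
    (hfm : 0 ≤ fm ^ 2 - c0 ^ 2) (hcc : 0 < c ^ 2 - c0 ^ 2) :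
    ((fm / 2) * (Real.sqrt (fm ^ 2 - c0 ^ 2) / 2) ^ (n - 1)) /
        ((c / 2) * (Real.sqrt (c ^ 2 - c0 ^ 2) / 2) ^ (n - 1)) =
      fm / c * ((fm ^ 2 - c0 ^ 2) / (c ^ 2 - c0 ^ 2)) ^ (((n : ℝ) - 1) / 2) := by
  obtain ⟨m, rfl⟩ : ∃ m, n = m + 1 := ⟨n - 1, by omega⟩
  have hsc : 0 < Real.sqrt (c ^ 2 - c0 ^ 2) := Real.sqrt_pos.mpr hcc
  have e1 : (((m + 1 : ℕ) : ℝ) - 1) / 2 = (1 / 2) * (m : ℝ) := by push_cast; ring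
  rw [e1, Real.rpow_mul (by positivity), ← Real.sqrt_eq_rpow, Real.rpow_natCast,
    Real.sqrt_div hfm]
  simp only [Nat.add_sub_cancel]
  rw [div_pow, div_pow, div_pow]
  field_simp

/-- **Closed form for the volume ratio of confocal prolate hyperspheroids.**
For `n ≥ 1`, foci `xI, xG ∈ ℝⁿ` with `c_min = ‖xI − xG‖ > 0`, and transverse diameters
`c_min ≤ f̂_max ≤ c_i` with `c_min < c_i`, the ratio of the Lebesgue measures of the
greedy informed hyperspheroid (diameter `f̂_max`) and the informed hyperspheroid
(diameter `c_i`) equals `(f̂_max / c_i) · ((f̂_max² − c_min²)/(c_i² − c_min²))^((n−1)/2)`,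
and this ratio `ρ` satisfies `ρ ≤ 1`. -/
theorem volume_ratio_confocal_prolate_hyperspheroids
    {n : ℕ} (hn : 1 ≤ n) (xI xG : EuclideanSpace ℝ (Fin n))
    (fmax ci : ℝ)
    (hmin : 0 < ‖xI - xG‖)
    (h₁ : ‖xI - xG‖ ≤ fmax) (h₂ : fmax ≤ ci) (h₃ : ‖xI - xG‖ < ci) :
    (volume {x : EuclideanSpace ℝ (Fin n) | ‖x - xI‖ + ‖x - xG‖ ≤ fmax}).toReal /
        (volume {x : EuclideanSpace ℝ (Fin n) | ‖x - xI‖ + ‖x - xG‖ ≤ ci}).toReal =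
      fmax / ci *
        ((fmax ^ 2 - ‖xI - xG‖ ^ 2) / (ci ^ 2 - ‖xI - xG‖ ^ 2)) ^ (((n : ℝ) - 1) / 2) ∧
    (volume {x : EuclideanSpace ℝ (Fin n) | ‖x - xI‖ + ‖x - xG‖ ≤ fmax}).toReal /
        (volume {x : EuclideanSpace ℝ (Fin n) | ‖x - xI‖ + ‖x - xG‖ ≤ ci}).toReal ≤ 1 := by
  have hci : 0 < ci := lt_trans hmin h₃
  have hcc : 0 < ci ^ 2 - ‖xI - xG‖ ^ 2 := by nlinarith [norm_nonneg (xI - xG)]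
  have hvc := vol_spheroid hn xI xG ci hmin h₃.le (Or.inl h₃)
  have hsub : {x : EuclideanSpace ℝ (Fin n) | ‖x - xI‖ + ‖x - xG‖ ≤ fmax} ⊆
      {x : EuclideanSpace ℝ (Fin n) | ‖x - xI‖ + ‖x - xG‖ ≤ ci} :=
    fun x hx => le_trans hx h₂
  by_cases hcase : ‖xI - xG‖ < fmax ∨ n = 1
  · have hvf := vol_spheroid hn xI xG fmax hmin h₁ hcase
    have hVb0 : (volume (Metric.closedBall (0 : EuclideanSpace ℝ (Fin n)) 1)) ≠ 0 :=
      (Metric.measure_closedBall_pos volume (0 : EuclideanSpace ℝ (Fin n)) one_pos).ne'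
    have hVbt : (volume (Metric.closedBall (0 : EuclideanSpace ℝ (Fin n)) 1)) ≠ ⊤ :=
      (IsCompact.measure_lt_top (isCompact_closedBall _ _)).ne
    have hVbR : (volume (Metric.closedBall (0 : EuclideanSpace ℝ (Fin n)) 1)).toReal ≠ 0 :=
      ENNReal.toReal_ne_zero.mpr ⟨hVb0, hVbt⟩
    have hVbRpos : 0 < (volume (Metric.closedBall (0 : EuclideanSpace ℝ (Fin n)) 1)).toReal :=
      ENNReal.toReal_pos hVb0 hVbt
    have hrf0 : 0 ≤ (fmax / 2) * (Real.sqrt (fmax ^ 2 - ‖xI - xG‖ ^ 2) / 2) ^ (n - 1) := by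
      have h0 : 0 < fmax := lt_of_lt_of_le hmin h₁
      positivity
    have hrc0 : 0 < (ci / 2) * (Real.sqrt (ci ^ 2 - ‖xI - xG‖ ^ 2) / 2) ^ (n - 1) := by
      have hsc : 0 < Real.sqrt (ci ^ 2 - ‖xI - xG‖ ^ 2) := Real.sqrt_pos.mpr hcc
      positivity
    have hnum : (volume {x : EuclideanSpace ℝ (Fin n) | ‖x - xI‖ + ‖x - xG‖ ≤ fmax}).toReal =
        ((fmax / 2) * (Real.sqrt (fmax ^ 2 - ‖xI - xG‖ ^ 2) / 2) ^ (n - 1)) *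
          (volume (Metric.closedBall (0 : EuclideanSpace ℝ (Fin n)) 1)).toReal := by
      rw [hvf, ENNReal.toReal_mul, ENNReal.toReal_ofReal hrf0]
    have hden : (volume {x : EuclideanSpace ℝ (Fin n) | ‖x - xI‖ + ‖x - xG‖ ≤ ci}).toReal =
        ((ci / 2) * (Real.sqrt (ci ^ 2 - ‖xI - xG‖ ^ 2) / 2) ^ (n - 1)) *
          (volume (Metric.closedBall (0 : EuclideanSpace ℝ (Fin n)) 1)).toReal := by
      rw [hvc, ENNReal.toReal_mul, ENNReal.toReal_ofReal hrc0.le]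
    constructor
    · rw [hnum, hden, mul_div_mul_right _ _ hVbR]
      exact ratio_alg hn (ne_of_gt hci) (by nlinarith) hcc
    · rw [div_le_one (by rw [hden]; positivity)]
      refine ENNReal.toReal_mono ?_ (measure_mono hsub)
      rw [hvc]
      exact ENNReal.mul_ne_top ENNReal.ofReal_ne_top hVbt
  · push_neg at hcase
    obtain ⟨h4, h5⟩ := hcase
    have hn2 : 2 ≤ n := by omega
    have hfm : fmax = ‖xI - xG‖ := le_antisymm h4 h₁
    have h0 : volume {x : EuclideanSpace ℝ (Fin n) | ‖x - xI‖ + ‖x - xG‖ ≤ fmax} = 0 := by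
      rw [hfm]
      exact vol_degenerate hn2 xI xG hmin
    have he : ((n : ℝ) - 1) / 2 ≠ 0 := by
      have : (2 : ℝ) ≤ (n : ℝ) := by exact_mod_cast hn2
      intro h
      rw [div_eq_zero_iff] at h
      rcases h with h | h <;> linarith
    rw [h0]
    simp only [ENNReal.toReal_zero, zero_div]
    constructor
    · rw [hfm, sub_self, zero_div, Real.zero_rpow he, mul_zero]
    · norm_num
end
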